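/- Let A be a Grothendieck abelian category and (U,V) a complete hereditary cotorsion pair in A. Suppose β : U → U′ is a chain map of complexes whose mapping cone is U-acyclic (acyclic with cycles in U and Hom(−, W)-exact for the relevant class), V is a complex of objects in V such that Hom_A(C, V) is acyclic for every U-acyclic complex C, and α : U → V is a chain map. Then there exists a chain map γ : U′ → V with γ∘β chain homotopic to α, and γ is unique up to chain homotopy. -/

import Mathlib

/-!
In the homotopy category, `β` sits in the distinguished triangle
`U₁ ⟶ U₂ ⟶ cone β ⟶ U₁⟦1⟧`. The cone is `U`-acyclic, so the semi-`V` hypothesis kills every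
morphism `cone β ⟶ V'⟦k⟧`, and the long exact sequence of `Hom(-, V')` along the triangle makes
precomposition with `β` a bijection `Hom(U₂, V') ≃ Hom(U₁, V')` up to homotopy.
-/

open CategoryTheory Category Limits

universe v u

noncomputable instance : DecidableRel (ComplexShape.up ℤ).Rel :=
  fun _ _ => Classical.dec _

instance {A : Type u} [Category.{v} A] [Abelian A] {X Y : CochainComplex A ℤ} (α : X ⟶ Y) :
    HomologicalComplex.HasHomotopyCofiber α :=
  ⟨fun _ _ _ => inferInstance⟩

/-- A `U`-acyclic complex: an acyclic complex of objects of `U` whose cycle objects lie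
in `U`. -/
def UAcyclicComplex {A : Type u} [Category.{v} A] [Abelian A] (U : Set A)
    (C : CochainComplex A ℤ) : Prop :=
  (∀ n, C.X n ∈ U) ∧ (∀ n, C.ExactAt n) ∧ (∀ n, C.cycles n ∈ U)

/-- The total Hom complex `Hom_A(C, V)` is acyclic, encoded as: every chain map from `C`
to any shift of `V` is null-homotopic. -/
def HomComplexAcyclic {A : Type u} [Category.{v} A] [Abelian A]
    (C V : CochainComplex A ℤ) : Prop :=
  ∀ (k : ℤ) (f : C ⟶ V⟦k⟧), Nonempty (Homotopy f 0)

namespace CategoryTheory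

lemma eq_zero_of_forall_shift_eq_zero {C : Type*} [Category C] [Preadditive C]
    [HasShift C ℤ] [∀ n : ℤ, (shiftFunctor C n).Additive] {X Y : C} {a b : ℤ} (hab : a + b = 0)
    (hY : ∀ f : X ⟶ Y⟦b⟧, f = 0) (f : X⟦a⟧ ⟶ Y) : f = 0 := by
  have : f⟦b⟧' = 0 := by
    rw [← cancel_epi ((shiftFunctorCompIsoId C a b hab).inv.app X), comp_zero]
    exact hY _
  exact (shiftFunctor C b).map_injective (by rw [this, Functor.map_zero])

-- Written qualified because `Triangle.shiftFunctor` shadows it in the lemma's namespace.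
variable {C : Type*} [Category C] [Preadditive C] [HasZeroObject C] [HasShift C ℤ]
  [∀ n : ℤ, (CategoryTheory.shiftFunctor C n).Additive] [Pretriangulated C]

lemma Pretriangulated.Triangle.existsUnique_mor₁_comp {T : Triangle C} (hT : T ∈ distTriang C)
    {Y : C} (hY : ∀ (k : ℤ) (f : T.obj₃ ⟶ Y⟦k⟧), f = 0) (a : T.obj₁ ⟶ Y) :
    ∃! g : T.obj₂ ⟶ Y, T.mor₁ ≫ g = a := by
  obtain ⟨g, hg⟩ : ∃ g : T.obj₂ ⟶ Y, a = T.mor₁ ≫ g :=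
    yoneda_exact₂ _ (inv_rot_of_distTriang _ hT) a
      (eq_zero_of_forall_shift_eq_zero (neg_add_cancel 1) (hY 1) _)
  refine ⟨g, hg.symm, fun g' hg' => ?_⟩
  obtain ⟨d, hd⟩ := yoneda_exact₂ _ hT (g' - g) (by rw [Preadditive.comp_sub, hg', ← hg, sub_self])
  have hd₀ : d = 0 := by
    rw [← cancel_mono ((CategoryTheory.shiftFunctorZero C ℤ).inv.app Y), zero_comp]
    exact hY 0 _
  rw [hd₀, comp_zero] at hd
  exact sub_eq_zero.mp hd

end CategoryTheory

-- The two sides are built with different `DecidableRel (ComplexShape.up ℤ).Rel` instances.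
lemma homotopyCofiber_eq_mappingCone {A : Type u} [Category.{v} A] [Abelian A]
    {X Y : CochainComplex A ℤ} (β : X ⟶ Y) :
    HomologicalComplex.homotopyCofiber β = CochainComplex.mappingCone β := by
  congr
  exact Subsingleton.elim _ _

lemma HomComplexAcyclic.quotient_hom_shift_eq_zero {A : Type u} [Category.{v} A] [Abelian A]
    {C V : CochainComplex A ℤ} (h : HomComplexAcyclic C V) (k : ℤ)
    (f : (HomotopyCategory.quotient A _).obj C ⟶ ((HomotopyCategory.quotient A _).obj V)⟦k⟧) :
    f = 0 := by
  let Q := HomotopyCategory.quotient A (ComplexShape.up ℤ)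
  obtain ⟨g, hg⟩ := Q.map_surjective (f ≫ (Q.commShiftIso k).inv.app V)
  rw [← cancel_mono ((Q.commShiftIso k).inv.app V), zero_comp, ← hg,
    HomotopyCategory.quotient_map_eq_zero_iff]
  exact h k g

theorem stmt9_general {A : Type u} [Category.{v} A] [Abelian A]
    (U : Set A)
    (U₁ U₂ V' : CochainComplex A ℤ) (β : U₁ ⟶ U₂)
    (hβ : UAcyclicComplex U (HomologicalComplex.homotopyCofiber β))
    (hsemi : ∀ C : CochainComplex A ℤ, UAcyclicComplex U C → HomComplexAcyclic C V')
    (α : U₁ ⟶ V') :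
    ∃ γ : U₂ ⟶ V', Nonempty (Homotopy (β ≫ γ) α) ∧
      ∀ γ' : U₂ ⟶ V', Nonempty (Homotopy (β ≫ γ') α) → Nonempty (Homotopy γ' γ) := by
  let Q := HomotopyCategory.quotient A (ComplexShape.up ℤ)
  have hcone : UAcyclicComplex U (CochainComplex.mappingCone β) :=
    homotopyCofiber_eq_mappingCone β ▸ hβ
  obtain ⟨γ₀, hγ₀, huniq⟩ := Pretriangulated.Triangle.existsUnique_mor₁_comp
    (HomotopyCategory.mappingCone_triangleh_distinguished β)
    (hsemi _ hcone).quotient_hom_shift_eq_zero (Q.map α)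
  obtain ⟨γ, rfl⟩ := Q.map_surjective γ₀
  refine ⟨γ, ⟨HomotopyCategory.homotopyOfEq _ _ ((Q.map_comp β γ).trans hγ₀)⟩, ?_⟩
  rintro γ' ⟨h⟩
  exact ⟨HomotopyCategory.homotopyOfEq _ _
    (huniq _ ((Q.map_comp β γ').symm.trans (HomotopyCategory.eq_of_homotopy _ _ h)))⟩

/-- Lifting along `U`-quasi-isomorphisms into semi-`V` complexes, in a Grothendieck abelian
category with a complete hereditary cotorsion pair `(U,V)` (encoded via AB5 and a separator):
if the mapping cone of `β : U₁ ⟶ U₂` is `U`-acyclic, `V'` is a complex of objects of `V`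
with `Hom_A(C, V')` acyclic for every `U`-acyclic `C`, and `α : U₁ ⟶ V'`, then there is
`γ : U₂ ⟶ V'` with `γ ∘ β` homotopic to `α`, and `γ` is unique up to homotopy. -/
theorem stmt9 {A : Type u} [Category.{v} A] [Abelian A]
    [HasFilteredColimits A] [AB5 A] (G : A) (hG : IsSeparator G)
    (U V : Set A)
    (hcomplete : ∀ M : A, (∃ (V₀ U₀ : A) (f : V₀ ⟶ U₀) (g : U₀ ⟶ M) (w : f ≫ g = 0),
        V₀ ∈ V ∧ U₀ ∈ U ∧ (ShortComplex.mk f g w).ShortExact) ∧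
      (∃ (V₀ U₀ : A) (f : M ⟶ V₀) (g : V₀ ⟶ U₀) (w : f ≫ g = 0),
        V₀ ∈ V ∧ U₀ ∈ U ∧ (ShortComplex.mk f g w).ShortExact))
    (U₁ U₂ V' : CochainComplex A ℤ) (β : U₁ ⟶ U₂)
    (hβ : UAcyclicComplex U (HomologicalComplex.homotopyCofiber β))
    (hV' : ∀ n, V'.X n ∈ V)
    (hsemi : ∀ C : CochainComplex A ℤ, UAcyclicComplex U C → HomComplexAcyclic C V')
    (α : U₁ ⟶ V') :
    ∃ γ : U₂ ⟶ V', Nonempty (Homotopy (β ≫ γ) α) ∧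
      ∀ γ' : U₂ ⟶ V', Nonempty (Homotopy (β ≫ γ') α) → Nonempty (Homotopy γ' γ) :=
  stmt9_general U U₁ U₂ V' β hβ hsemi α
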